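/- arXiv:1805.12426 — 3 statements merged into one kernel-verified Lean document; each statement's English description precedes it below -/
import Mathlib

section
/- Let V be a finite-dimensional ℚ-vector space, n ≥ 1, and let B : V × V → ℂ be a symmetric ℚ-bilinear map with values in ℂ. Assume that for all α₁, …, α_{2n} ∈ V the polarized product Σ_{σ ∈ S_{2n}} B(α_{σ(1)}, α_{σ(2)}) ⋯ B(α_{σ(2n−1)}, α_{σ(2n)}) is a rational number, and that there exists λ ∈ V with B(λ, λ) ≠ 0. Then there exists a nonzero complex number t such that t · B(α, β) ∈ ℚ for all α, β ∈ V. -/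
/-!
Normalise by `c = B(λ, λ)`. Taking all `2n` vectors equal to `x` shows that `B(x, x)^n` is
rational, hence so is `(B(λ + kx, λ + kx) / c)^n = (1 + βk + αk²)^n` for every natural `k`, where
`β = 2 B(x, λ) / c` and `α = B(x, x) / c`. A polynomial taking rational values at all naturals has
rational coefficients (Lagrange interpolation); the coefficients of `X` and `X²` are `nβ` and
`nα + C(n, 2) β²`, so `α` is rational. Polarisation then makes `B / c` rational, i.e. `t = 1 / c`.
-/

open Polynomial

namespace Polynomial

theorem coeff_mem_of_eval_natCast_mem {K : Type*} [Field K] [CharZero K] (S : Subfield K)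
    (p : K[X]) (h : ∀ k : ℕ, p.eval (k : K) ∈ S) (i : ℕ) : p.coeff i ∈ S := by
  classical
  let nodes := Finset.range (p.natDegree + 1)
  have hinj : Set.InjOn (fun k : ℕ => (k : S)) nodes := fun a _ b _ hab =>
    Nat.cast_injective (congrArg (Subtype.val : S → K) hab)
  let q : S[X] := Lagrange.interpolate nodes (fun k : ℕ => (k : S)) fun k => ⟨p.eval (k : K), h k⟩
  have hq : q.map S.subtype = p := by
    refine eq_of_degrees_lt_of_eval_index_eq nodes
      (v := fun k : ℕ => (k : K)) (fun a _ b _ hab => Nat.cast_injective hab) ?_ ?_ ?_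
    · rw [degree_map_eq_of_injective S.subtype.injective]
      exact Lagrange.degree_interpolate_lt _ hinj
    · rw [Finset.card_range]
      exact degree_le_natDegree.trans_lt (mod_cast Nat.lt_succ_self _)
    · intro k hk
      rw [eval_map, eval₂_at_natCast]
      exact congrArg Subtype.val (Lagrange.eval_interpolate_at_node _ hinj hk)
  rw [← hq, coeff_map]
  exact (q.coeff i).2

section Quadratic

variable {R : Type*} [CommSemiring R] (a b : R)

theorem coeff_zero_one_add_C_mul_X_add_C_mul_X_sq_pow (n : ℕ) :
    ((1 + C b * X + C a * X ^ 2) ^ n).coeff 0 = 1 := by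
  simp [coeff_zero_eq_eval_zero]

theorem coeff_one_one_add_C_mul_X_add_C_mul_X_sq_pow (n : ℕ) :
    ((1 + C b * X + C a * X ^ 2) ^ n).coeff 1 = n * b := by
  induction n with
  | zero => simp [coeff_one]
  | succ n ih =>
    rw [pow_succ]
    simp [mul_add, coeff_mul_X_pow', ← mul_assoc, coeff_zero_one_add_C_mul_X_add_C_mul_X_sq_pow,
      ih]
    ring

theorem coeff_two_one_add_C_mul_X_add_C_mul_X_sq_pow (n : ℕ) :
    ((1 + C b * X + C a * X ^ 2) ^ n).coeff 2 = n * a + n.choose 2 * b ^ 2 := by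
  induction n with
  | zero => simp [coeff_one]
  | succ n ih =>
    rw [pow_succ]
    simp [mul_add, coeff_mul_X_pow', ← mul_assoc, coeff_zero_one_add_C_mul_X_add_C_mul_X_sq_pow,
      coeff_one_one_add_C_mul_X_add_C_mul_X_sq_pow, ih, Nat.choose_succ_succ]
    ring

end Quadratic

end Polynomial

section BilinMap

variable {R K V : Type*} [CommSemiring R] [Field K] [AddCommGroup V] [Module R V] [Module R K]

theorem apply_add_nsmul_self (B : LinearMap.BilinMap R V K) (hB : ∀ x y, B x y = B y x)
    (l x : V) (k : ℕ) :
    B (l + k • x) (l + k • x) = B l l + 2 * B x l * k + B x x * k ^ 2 := by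
  simp only [map_add, map_nsmul, LinearMap.add_apply, LinearMap.smul_apply, nsmul_eq_mul, hB l x]
  ring

theorem mul_apply_mem_of_mul_apply_self_mem (S : Subfield K) (B : LinearMap.BilinMap R V K)
    (hB : ∀ x y, B x y = B y x) [NeZero (2 : K)] (t : K) (h : ∀ x, t * B x x ∈ S) (x y : V) :
    t * B x y ∈ S := by
  have hexp : t * B (x + y) (x + y) - t * B x x - t * B y y = 2 * (t * B x y) := by
    simp only [map_add, LinearMap.add_apply, hB y x]
    ring
  have h2 : (2 : K) ∈ S := ofNat_mem S 2
  have := S.div_mem (S.sub_mem (S.sub_mem (h (x + y)) (h x)) (h y)) h2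
  rwa [hexp, mul_div_cancel_left₀ _ two_ne_zero] at this

theorem apply_self_div_apply_self_mem_of_pow_mem [CharZero K] (S : Subfield K)
    (B : LinearMap.BilinMap R V K) (hB : ∀ x y, B x y = B y x) {n : ℕ} (hn : n ≠ 0)
    (hpow : ∀ x, B x x ^ n ∈ S) {l : V} (hl : B l l ≠ 0) (x : V) : B x x / B l l ∈ S := by
  set b := 2 * B x l / B l l
  set a := B x x / B l l
  let p : K[X] := (1 + C b * X + C a * X ^ 2) ^ n
  have hp : ∀ k : ℕ, p.eval (k : K) ∈ S := by
    intro k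
    have : p.eval (k : K) = B (l + k • x) (l + k • x) ^ n / B l l ^ n := by
      rw [apply_add_nsmul_self B hB, ← div_pow]
      simp only [p, eval_pow, eval_add, eval_mul, eval_C, eval_X, eval_one, a, b]
      field_simp
    rw [this]
    exact S.div_mem (hpow _) (hpow l)
  have hn' : (n : K) ≠ 0 := Nat.cast_ne_zero.mpr hn
  have hb : b ∈ S := by
    have := S.div_mem (p.coeff_mem_of_eval_natCast_mem S hp 1) (natCast_mem S n)
    rwa [coeff_one_one_add_C_mul_X_add_C_mul_X_sq_pow, mul_div_cancel_left₀ _ hn'] at this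
  have := S.div_mem (S.sub_mem (p.coeff_mem_of_eval_natCast_mem S hp 2)
    (S.mul_mem (natCast_mem S (n.choose 2)) (S.pow_mem hb 2))) (natCast_mem S n)
  rwa [coeff_two_one_add_C_mul_X_add_C_mul_X_sq_pow, add_sub_cancel_right,
    mul_div_cancel_left₀ _ hn'] at this

end BilinMap

/-- Rationality step of the Fujiki formula: if the polarized `2n`-fold products of a
symmetric ℚ-bilinear ℂ-valued form are always rational and the form is nonzero on
some vector, then some nonzero complex multiple of the form takes rational values. -/
theorem stmt_6 {V : Type*} [AddCommGroup V] [Module ℚ V]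
    (n : ℕ) (hn : 1 ≤ n) (B : V →ₗ[ℚ] V →ₗ[ℚ] ℂ) (hBsymm : ∀ x y, B x y = B y x)
    (hrat : ∀ v : Fin (2 * n) → V,
      (∑ σ : Equiv.Perm (Fin (2 * n)), ∏ i : Fin n,
        B (v (σ ⟨2 * i.1, by have := i.2; omega⟩))
          (v (σ ⟨2 * i.1 + 1, by have := i.2; omega⟩)))
        ∈ Set.range ((↑) : ℚ → ℂ))
    (hlam : ∃ l : V, B l l ≠ 0) :
    ∃ t : ℂ, t ≠ 0 ∧ ∀ α β : V, t * B α β ∈ Set.range ((↑) : ℚ → ℂ) := by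
  obtain ⟨l, hl⟩ := hlam
  let S : Subfield ℂ := (Rat.castHom ℂ).fieldRange
  have hpow : ∀ x, B x x ^ n ∈ S := by
    intro x
    have h : _ ∈ S := hrat fun _ => x
    simp only [Finset.prod_const, Finset.card_univ, Fintype.card_fin, Finset.sum_const,
      nsmul_eq_mul] at h
    have := S.div_mem h (natCast_mem S (Fintype.card (Equiv.Perm (Fin (2 * n)))))
    rwa [mul_div_cancel_left₀ _ (Nat.cast_ne_zero.mpr Fintype.card_ne_zero)] at this
  refine ⟨(B l l)⁻¹, inv_ne_zero hl, fun α β => ?_⟩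
  refine mul_apply_mem_of_mul_apply_self_mem S B hBsymm _ (fun x => ?_) α β
  rw [inv_mul_eq_div]
  exact apply_self_div_apply_self_mem_of_pow_mem S B hBsymm (by omega) hpow hl x
end

section
/- Let A be a commutative ℂ-algebra equipped with a grading by ℕ × ℕ, i.e. a direct sum decomposition A = ⊕_{(p,q)} A_{p,q} of ℂ-submodules with A_{p,q} · A_{p',q'} ⊆ A_{p+p', q+q'} and 1 ∈ A_{0,0}. Fix n ≥ 1 and homogeneous elements σ ∈ A_{2,0}, ω ∈ A_{1,1}, τ ∈ A_{0,2}. Let ∫ : A → ℂ be a ℂ-linear functional vanishing on every homogeneous component A_{p,q} with (p,q) ≠ (2n,2n), and assume ∫((στ)^n) = 1. Define q(α) := (n/2)·∫((στ)^(n−1)·α²) + (1−n)·∫(σ^(n−1) τ^n · α) · ∫(σ^n τ^(n−1) · α) for α ∈ A. Then for all a, b ∈ ℂ and every ω' ∈ A_{1,1}, setting α = a•σ + ω' + b•τ, one has q(α) = a·b + (n/2)·∫((στ)^(n−1)·ω'²). -/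
/-- Equation (cacapuant): for `α = a•σ + ω' + b•τ` with `ω'` of type `(1,1)`, the
unnormalized Beauville–Bogomolov form satisfies
`q(α) = a·b + (n/2)·∫((στ)^(n-1)·ω'²)`. -/
theorem stmt_8 {A : Type*} [CommRing A] [Algebra ℂ A]
    (𝒜 : ℕ × ℕ → Submodule ℂ A) [GradedAlgebra 𝒜]
    (n : ℕ) (hn : 1 ≤ n) (σ ω τ : A)
    (hσ : σ ∈ 𝒜 (2, 0)) (hω : ω ∈ 𝒜 (1, 1)) (hτ : τ ∈ 𝒜 (0, 2))
    (I : A →ₗ[ℂ] ℂ)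
    (hvanish : ∀ p q : ℕ, (p, q) ≠ (2 * n, 2 * n) → ∀ x ∈ 𝒜 (p, q), I x = 0)
    (hnorm : I ((σ * τ) ^ n) = 1)
    (a b : ℂ) (ω' : A) (hω' : ω' ∈ 𝒜 (1, 1))
    (α : A) (hα : α = a • σ + ω' + b • τ) :
    ((n : ℂ) / 2) * I ((σ * τ) ^ (n - 1) * α ^ 2) +
        (1 - (n : ℂ)) * I (σ ^ (n - 1) * τ ^ n * α) * I (σ ^ n * τ ^ (n - 1) * α) =
      a * b + ((n : ℂ) / 2) * I ((σ * τ) ^ (n - 1) * ω' ^ 2) := by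
  obtain ⟨m, rfl⟩ : ∃ m, n = m + 1 := ⟨n - 1, (Nat.succ_pred_eq_of_pos hn).symm⟩
  simp only [Nat.add_sub_cancel] at *
  have hpow : ∀ (x : A) (p q k : ℕ), x ∈ 𝒜 (p, q) → x ^ k ∈ 𝒜 (k * p, k * q) := by
    intro x p q k hx
    simpa [Prod.smul_mk, smul_eq_mul] using SetLike.pow_mem_graded k hx
  have hστ : σ * τ ∈ 𝒜 (2, 2) := by
    have := SetLike.mul_mem_graded hσ hτ
    simpa using this
  have hk : (σ * τ) ^ m ∈ 𝒜 (m * 2, m * 2) := hpow _ _ _ m hστ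
  have hσm : ∀ k, σ ^ k ∈ 𝒜 (k * 2, 0) := fun k => by
    simpa using hpow σ 2 0 k hσ
  have hτm : ∀ k, τ ^ k ∈ 𝒜 (0, k * 2) := fun k => by
    simpa using hpow τ 0 2 k hτ
  have hz : ∀ (x : A) (pq : ℕ × ℕ), x ∈ 𝒜 pq → pq ≠ (2 * (m + 1), 2 * (m + 1)) →
      I x = 0 := by
    intro x pq hx h
    exact hvanish pq.1 pq.2 (by simpa using h) x (by simpa using hx)
  -- individual vanishing facts
  have z1 : I ((σ * τ) ^ m * σ ^ 2) = 0 :=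
    hz _ _ (SetLike.mul_mem_graded hk (hσm 2)) (by simp only [Prod.mk_add_mk, ne_eq, Prod.mk.injEq, not_and]; omega)
  have z2 : I ((σ * τ) ^ m * τ ^ 2) = 0 :=
    hz _ _ (SetLike.mul_mem_graded hk (hτm 2)) (by simp only [Prod.mk_add_mk, ne_eq, Prod.mk.injEq, not_and]; omega)
  have z3 : I ((σ * τ) ^ m * (σ * ω')) = 0 :=
    hz _ _ (SetLike.mul_mem_graded hk (SetLike.mul_mem_graded hσ hω')) (by simp only [Prod.mk_add_mk, ne_eq, Prod.mk.injEq, not_and]; omega)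
  have z4 : I ((σ * τ) ^ m * (τ * ω')) = 0 :=
    hz _ _ (SetLike.mul_mem_graded hk (SetLike.mul_mem_graded hτ hω')) (by simp only [Prod.mk_add_mk, ne_eq, Prod.mk.injEq, not_and]; omega)
  have z5 : I (σ ^ m * τ ^ (m + 1) * ω') = 0 :=
    hz _ _ (SetLike.mul_mem_graded (SetLike.mul_mem_graded (hσm m) (hτm (m + 1))) hω')
      (by simp only [Prod.mk_add_mk, ne_eq, Prod.mk.injEq, not_and]; omega)
  have z6 : I (σ ^ m * τ ^ (m + 2)) = 0 :=
    hz _ _ (SetLike.mul_mem_graded (hσm m) (hτm (m + 2))) (by simp only [Prod.mk_add_mk, ne_eq, Prod.mk.injEq, not_and]; omega)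
  have z7 : I (σ ^ (m + 1) * τ ^ m * ω') = 0 :=
    hz _ _ (SetLike.mul_mem_graded (SetLike.mul_mem_graded (hσm (m + 1)) (hτm m)) hω')
      (by simp only [Prod.mk_add_mk, ne_eq, Prod.mk.injEq, not_and]; omega)
  have z8 : I (σ ^ (m + 2) * τ ^ m) = 0 :=
    hz _ _ (SetLike.mul_mem_graded (hσm (m + 2)) (hτm m)) (by simp only [Prod.mk_add_mk, ne_eq, Prod.mk.injEq, not_and]; omega)
  -- expansions
  have e1 : (σ * τ) ^ m * α ^ 2 =
      (2 * (a * b)) • ((σ * τ) ^ (m + 1)) + (σ * τ) ^ m * ω' ^ 2 +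
        (a ^ 2) • ((σ * τ) ^ m * σ ^ 2) + (b ^ 2) • ((σ * τ) ^ m * τ ^ 2) +
        (2 * a) • ((σ * τ) ^ m * (σ * ω')) + (2 * b) • ((σ * τ) ^ m * (τ * ω')) := by
    rw [hα]
    simp only [Algebra.smul_def, map_mul, map_pow, map_ofNat]
    ring
  have e2 : σ ^ m * τ ^ (m + 1) * α =
      a • ((σ * τ) ^ (m + 1)) + σ ^ m * τ ^ (m + 1) * ω' + b • (σ ^ m * τ ^ (m + 2)) := by
    rw [hα, mul_pow]
    simp only [Algebra.smul_def]
    ring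
  have e3 : σ ^ (m + 1) * τ ^ m * α =
      b • ((σ * τ) ^ (m + 1)) + σ ^ (m + 1) * τ ^ m * ω' + a • (σ ^ (m + 2) * τ ^ m) := by
    rw [hα, mul_pow]
    simp only [Algebra.smul_def]
    ring
  rw [e1, e2, e3]
  simp only [map_add, map_smul, hnorm, z1, z2, z3, z4, z5, z6, z7, z8, smul_eq_mul,
    mul_zero, add_zero, mul_one]
  push_cast
  ring
end

section
/- Let A be a commutative ℂ-algebra equipped with a grading by ℕ × ℕ, i.e. a direct sum decomposition A = ⊕_{(p,q)} A_{p,q} of ℂ-submodules with A_{p,q} · A_{p',q'} ⊆ A_{p+p', q+q'} and 1 ∈ A_{0,0}. Fix n ≥ 1 and homogeneous elements σ ∈ A_{2,0}, ω ∈ A_{1,1}, τ ∈ A_{0,2}. Let ∫ : A → ℂ be a ℂ-linear functional vanishing on every homogeneous component A_{p,q} with (p,q) ≠ (2n,2n), and assume ∫((στ)^n) = 1. Define q(α) := (n/2)·∫((στ)^(n−1)·α²) + (1−n)·∫(σ^(n−1) τ^n · α) · ∫(σ^n τ^(n−1) · α) for α ∈ A. Then for all a, b ∈ ℂ and every ω'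 ∈ A_{1,1}, setting α = a•σ + ω' + b•τ, one has ∫(α^(n+1) · τ^(n−1)) = (n+1) · q(α) · (∫(α · σ^(n−1) τ^n))^(n−1). -/
/-- A displayed identity in Step 1 of the proof of the local Torelli theorem and
Fujiki formula: `∫(α^(n+1)·τ^(n-1)) = (n+1)·q(α)·(∫(α·σ^(n-1)·τ^n))^(n-1)` for
`α = a•σ + ω' + b•τ`. -/
theorem stmt_9 {A : Type*} [CommRing A] [Algebra ℂ A]
    (𝒜 : ℕ × ℕ → Submodule ℂ A) [GradedAlgebra 𝒜]
    (n : ℕ) (hn : 1 ≤ n) (σ ω τ : A)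
    (hσ : σ ∈ 𝒜 (2, 0)) (hω : ω ∈ 𝒜 (1, 1)) (hτ : τ ∈ 𝒜 (0, 2))
    (I : A →ₗ[ℂ] ℂ)
    (hvanish : ∀ p q : ℕ, (p, q) ≠ (2 * n, 2 * n) → ∀ x ∈ 𝒜 (p, q), I x = 0)
    (hnorm : I ((σ * τ) ^ n) = 1)
    (a b : ℂ) (ω' : A) (hω' : ω' ∈ 𝒜 (1, 1))
    (α : A) (hα : α = a • σ + ω' + b • τ) :
    I (α ^ (n + 1) * τ ^ (n - 1)) =
      ((n : ℂ) + 1) *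
        (((n : ℂ) / 2) * I ((σ * τ) ^ (n - 1) * α ^ 2) +
          (1 - (n : ℂ)) * I (σ ^ (n - 1) * τ ^ n * α) * I (σ ^ n * τ ^ (n - 1) * α)) *
        (I (α * (σ ^ (n - 1) * τ ^ n))) ^ (n - 1) := by
  obtain ⟨m, rfl⟩ : ∃ m, n = m + 1 := ⟨n - 1, by omega⟩
  simp only [Nat.add_sub_cancel]
  -- membership lemmas
  have hσp : ∀ i : ℕ, σ ^ i ∈ 𝒜 (2 * i, 0) := fun i => by
    have h := SetLike.pow_mem_graded i hσ
    have e : i • ((2 : ℕ), (0 : ℕ)) = (2 * i, 0) := by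
      simp [Prod.ext_iff, smul_eq_mul, mul_comm]
    rwa [e] at h
  have hωp : ∀ j : ℕ, ω' ^ j ∈ 𝒜 (j, j) := fun j => by
    have h := SetLike.pow_mem_graded j hω'
    have e : j • ((1 : ℕ), (1 : ℕ)) = (j, j) := by
      simp [Prod.ext_iff, smul_eq_mul]
    rwa [e] at h
  have hτp : ∀ k : ℕ, τ ^ k ∈ 𝒜 (0, 2 * k) := fun k => by
    have h := SetLike.pow_mem_graded k hτ
    have e : k • ((0 : ℕ), (2 : ℕ)) = (0, 2 * k) := by
      simp [Prod.ext_iff, smul_eq_mul, mul_comm]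
    rwa [e] at h
  have hmem : ∀ i j k : ℕ, σ ^ i * ω' ^ j * τ ^ k ∈ 𝒜 (2 * i + j, j + 2 * k) := by
    intro i j k
    have h := SetLike.mul_mem_graded (SetLike.mul_mem_graded (hσp i) (hωp j)) (hτp k)
    have e : (((2 * i, 0) : ℕ × ℕ) + (j, j) + (0, 2 * k)) = (2 * i + j, j + 2 * k) := by
      simp [Prod.ext_iff]
    rwa [e] at h
  have hz : ∀ i j k : ℕ, ¬(2 * i + j = 2 * (m + 1) ∧ j + 2 * k = 2 * (m + 1)) →
      I (σ ^ i * ω' ^ j * τ ^ k) = 0 := by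
    intro i j k h
    exact hvanish _ _ (by simp only [ne_eq, Prod.mk.injEq]; omega) _ (hmem i j k)
  have hone : I (σ ^ (m + 1) * ω' ^ 0 * τ ^ (m + 1)) = 1 := by
    rw [pow_zero, mul_one, ← mul_pow]; exact hnorm
  set J := I (σ ^ m * ω' ^ 2 * τ ^ m) with hJ
  -- expansion of the left-hand side
  have expand : α ^ (m + 1 + 1) * τ ^ m =
      ∑ k ∈ Finset.range (m + 3), ∑ j ∈ Finset.range (k + 1),
        (a ^ j * b ^ (m + 2 - k) * ((m + 2).choose k : ℂ) * (k.choose j : ℂ)) •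
          (σ ^ j * ω' ^ (k - j) * τ ^ (m + 2 - k + m)) := by
    rw [hα, show m + 1 + 1 = m + 2 from rfl, add_pow, Finset.sum_mul]
    refine Finset.sum_congr rfl fun k hk => ?_
    rw [add_pow, Finset.sum_mul, Finset.sum_mul, Finset.sum_mul]
    refine Finset.sum_congr rfl fun j hj => ?_
    simp only [Algebra.smul_def, map_mul, map_pow, map_natCast, mul_pow]
    ring
  have hIsum : I (α ^ (m + 1 + 1) * τ ^ m) =
      ∑ k ∈ Finset.range (m + 3), ∑ j ∈ Finset.range (k + 1),
        (a ^ j * b ^ (m + 2 - k) * ((m + 2).choose k : ℂ) * (k.choose j : ℂ)) *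
          I (σ ^ j * ω' ^ (k - j) * τ ^ (m + 2 - k + m)) := by
    rw [expand, map_sum]
    refine Finset.sum_congr rfl fun k _ => ?_
    rw [map_sum]
    exact Finset.sum_congr rfl fun j _ => by rw [map_smul, smul_eq_mul]
  -- evaluate the double sum
  have hval : I (α ^ (m + 1 + 1) * τ ^ m) =
      ((m : ℂ) + 2) * a ^ (m + 1) * b + ((m + 2).choose m : ℂ) * a ^ m * J := by
    rw [hIsum]
    rw [Finset.sum_range_succ, Finset.sum_range_succ]
    have h0 : ∑ k ∈ Finset.range (m + 1), ∑ j ∈ Finset.range (k + 1),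
        (a ^ j * b ^ (m + 2 - k) * ((m + 2).choose k : ℂ) * (k.choose j : ℂ)) *
          I (σ ^ j * ω' ^ (k - j) * τ ^ (m + 2 - k + m)) = 0 := by
      refine Finset.sum_eq_zero fun k hk => Finset.sum_eq_zero fun j hj => ?_
      rw [Finset.mem_range] at hk hj
      rw [hz _ _ _ (by omega), mul_zero]
    have h1 : ∑ j ∈ Finset.range (m + 1 + 1),
        (a ^ j * b ^ (m + 2 - (m + 1)) * ((m + 2).choose (m + 1) : ℂ) * ((m + 1).choose j : ℂ)) *
          I (σ ^ j * ω' ^ (m + 1 - j) * τ ^ (m + 2 - (m + 1) + m)) =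
        ((m : ℂ) + 2) * a ^ (m + 1) * b := by
      rw [Finset.sum_range_succ]
      have hrest : ∑ j ∈ Finset.range (m + 1),
          (a ^ j * b ^ (m + 2 - (m + 1)) * ((m + 2).choose (m + 1) : ℂ) * ((m + 1).choose j : ℂ)) *
            I (σ ^ j * ω' ^ (m + 1 - j) * τ ^ (m + 2 - (m + 1) + m)) = 0 := by
        refine Finset.sum_eq_zero fun j hj => ?_
        rw [Finset.mem_range] at hj
        rw [hz _ _ _ (by omega), mul_zero]
      rw [hrest, zero_add]
      have e1 : m + 2 - (m + 1) = 1 := by omega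
      have e2 : m + 1 - (m + 1) = 0 := by omega
      rw [e1, e2, show 1 + m = m + 1 from by omega, hone, Nat.choose_self,
        Nat.choose_succ_self_right]
      push_cast
      ring
    have h2 : ∑ j ∈ Finset.range (m + 1 + 1 + 1),
        (a ^ j * b ^ (m + 2 - (m + 1 + 1)) * ((m + 2).choose (m + 1 + 1) : ℂ) * ((m + 1 + 1).choose j : ℂ)) *
          I (σ ^ j * ω' ^ (m + 1 + 1 - j) * τ ^ (m + 2 - (m + 1 + 1) + m)) =
        ((m + 2).choose m : ℂ) * a ^ m * J := by
      rw [Finset.sum_eq_single_of_mem m (by simp; omega)]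
      · have e1 : m + 2 - (m + 1 + 1) = 0 := by omega
        have e2 : m + 1 + 1 - m = 2 := by omega
        rw [e1, e2, show (0 : ℕ) + m = m from by omega, show m + 1 + 1 = m + 2 from rfl,
          Nat.choose_self, ← hJ]
        push_cast
        ring
      · intro j hj hne
        rw [Finset.mem_range] at hj
        rw [hz _ _ _ (by omega), mul_zero]
    rw [h0, h1, h2, zero_add]
  -- the quadratic-form side
  have hA : I ((σ * τ) ^ m * α ^ 2) = 2 * (a * b) + J := by
    have he : (σ * τ) ^ m * α ^ 2 =
        (a ^ 2) • (σ ^ (m + 2) * ω' ^ 0 * τ ^ m) + (2 * a) • (σ ^ (m + 1) * ω' ^ 1 * τ ^ m)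
        + (2 * (a * b)) • (σ ^ (m + 1) * ω' ^ 0 * τ ^ (m + 1)) + σ ^ m * ω' ^ 2 * τ ^ m
        + (2 * b) • (σ ^ m * ω' ^ 1 * τ ^ (m + 1)) + (b ^ 2) • (σ ^ m * ω' ^ 0 * τ ^ (m + 2)) := by
      rw [hα]
      simp only [Algebra.smul_def, map_mul, map_pow, map_ofNat]
      ring
    rw [he]
    simp only [map_add, map_smul, smul_eq_mul]
    rw [hz (m + 2) 0 m (by omega), hz (m + 1) 1 m (by omega), hz m 1 (m + 1) (by omega),
      hz m 0 (m + 2) (by omega), hone, ← hJ]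
    ring
  have hB : I (σ ^ m * τ ^ (m + 1) * α) = a := by
    have he : σ ^ m * τ ^ (m + 1) * α =
        a • (σ ^ (m + 1) * ω' ^ 0 * τ ^ (m + 1)) + σ ^ m * ω' ^ 1 * τ ^ (m + 1)
        + b • (σ ^ m * ω' ^ 0 * τ ^ (m + 2)) := by
      rw [hα]
      simp only [Algebra.smul_def]
      ring
    rw [he]
    simp only [map_add, map_smul, smul_eq_mul]
    rw [hz m 1 (m + 1) (by omega), hz m 0 (m + 2) (by omega), hone]
    ring
  have hC : I (σ ^ (m + 1) * τ ^ m * α) = b := by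
    have he : σ ^ (m + 1) * τ ^ m * α =
        a • (σ ^ (m + 2) * ω' ^ 0 * τ ^ m) + σ ^ (m + 1) * ω' ^ 1 * τ ^ m
        + b • (σ ^ (m + 1) * ω' ^ 0 * τ ^ (m + 1)) := by
      rw [hα]
      simp only [Algebra.smul_def]
      ring
    rw [he]
    simp only [map_add, map_smul, smul_eq_mul]
    rw [hz (m + 2) 0 m (by omega), hz (m + 1) 1 m (by omega), hone]
    ring
  have hD : I (α * (σ ^ m * τ ^ (m + 1))) = a := by
    rw [show α * (σ ^ m * τ ^ (m + 1)) = σ ^ m * τ ^ (m + 1) * α from by ring, hB]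
  have hch : ((m + 2).choose m : ℂ) = ((m : ℂ) + 2) * ((m : ℂ) + 1) / 2 := by
    have e : (m + 2).choose m = (m + 2).choose 2 := by
      rw [← Nat.choose_symm (by omega)]
      congr 1
      omega
    rw [e, Nat.cast_choose_two]
    push_cast
    ring
  rw [hval, hA, hB, hC, hD, hch]
  push_cast
  ring
end
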